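/- arXiv:1511.05479 — 3 statements merged into one kernel-verified Lean document; each statement's English description precedes it below -/
import Mathlib

section
/- For a finite point set P in a metric space X and integer k ≥ 1 with k ≤ |P|, the k-distance function d_{P,k}(x) = sqrt((1/k) Σ_{i=1}^k d(x, p_i(x))²), where p_i(x) is the i-th nearest neighbor of x in P, is 1-Lipschitz: |d_{P,k}(x) - d_{P,k}(y)| ≤ d(x,y) for all x, y ∈ X. -/
open Metric

/-- Core loop of the Declutter algorithm: scan the (pre-sorted) list, keeping a point `p`
iff no previously kept point lies in the open ball `B(p, 2 f p)` (w.r.t. distance `d`). -/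
noncomputable def declutterAux {X : Type*} (d : X → X → ℝ) (f : X → ℝ) :
    List X → List X → List X
  | Q, [] => Q
  | Q, p :: rest =>
    if ∀ q ∈ Q, 2 * f p ≤ d p q then declutterAux d f (Q ++ [p]) rest
    else declutterAux d f Q rest

noncomputable def declutter {X : Type*} (d : X → X → ℝ) (f : X → ℝ) (L : List X) : List X :=
  declutterAux d f [] L

/-- `Q` is a possible output of the Declutter algorithm on `P`, with robust distance
function `f`: the points of `P` are processed in nondecreasing order of `f`
(ties broken arbitrarily). -/
def IsDeclutterOutput {X : Type*} (d : X → X → ℝ) (f : X → ℝ) (P : Finset X)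
    (Q : List X) : Prop :=
  ∃ L : List X, L.Perm P.toList ∧ L.Pairwise (fun a b => f a ≤ f b) ∧ Q = declutter d f L

variable {X : Type*} [MetricSpace X]

/-- Sorted (nondecreasing) list of distances from `x` to the points of `P`. -/
noncomputable def sortedDists (P : Finset X) (x : X) : List ℝ :=
  (P.val.map (dist x)).sort (· ≤ ·)

/-- The k-distance: root mean square of the distances to the k nearest neighbors in `P`. -/
noncomputable def kdist (P : Finset X) (k : ℕ) (x : X) : ℝ :=
  Real.sqrt ((1 / (k : ℝ)) * (((sortedDists P x).take k).map (fun r => r ^ 2)).sum)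

/-- `P` is an ε_k-noisy sample of `K`:
(1) the k-distance is at most ε on `K`; (2) every point of the space is within
`kdist + ε` of `K`. -/
def NoisySample (P : Finset X) (k : ℕ) (K : Set X) (ε : ℝ) : Prop :=
  (∀ x ∈ K, kdist P k x ≤ ε) ∧ ∀ x : X, infDist x K ≤ kdist P k x + ε

/-! The `i`-th smallest distance from `x` to `P` is 1-Lipschitz in `x`: if `i + 1` points of `P`
lie within `r` of `y`, they lie within `r + d(x, y)` of `x`. So the vectors of the `k` smallest
distances at `x` and at `y` differ by at most `d(x, y)` in each coordinate, hence by at most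
`√k · d(x, y)` in `ℓ²`; since `d_{P,k}` is the `ℓ²` norm of that vector divided by `√k`, the
reverse triangle inequality concludes. -/

theorem List.getElem_le_iff_lt_countP {α : Type*} [LinearOrder α] {l : List α}
    (hl : l.Pairwise (· ≤ ·)) {i : ℕ} (hi : i < l.length) {b : α} :
    l[i] ≤ b ↔ i < l.countP (· ≤ b) := by
  induction l generalizing i with
  | nil => simp at hi
  | cons a t ih =>
    rw [List.pairwise_cons] at hl
    by_cases hab : a ≤ b
    · rw [countP_cons_of_pos (by simpa)]
      cases i with
      | zero => simpa
      | succ i => simpa using ih hl.2 (by simpa using hi)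
    · have hgt : ∀ c ∈ a :: t, ¬c ≤ b := by
        rintro c hc hcb
        rcases mem_cons.1 hc with rfl | hc
        · exact hab hcb
        · exact hab ((hl.1 c hc).trans hcb)
      rw [countP_eq_zero.2 (by simpa using hgt)]
      simpa using hgt _ (getElem_mem hi)

theorem Multiset.getElem_sort_map_le_add {ι α : Type*} [AddCommMonoid α] [LinearOrder α]
    [IsOrderedAddMonoid α] {s : Multiset ι} {f g : ι → α} {c : α} (h : ∀ p, f p ≤ g p + c)
    {i : ℕ} (hf : i < ((s.map f).sort (· ≤ ·)).length) (hg : i < ((s.map g).sort (· ≤ ·)).length) :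
    ((s.map f).sort (· ≤ ·))[i] ≤ ((s.map g).sort (· ≤ ·))[i] + c := by
  have hcount : ∀ (φ : ι → α) (a : α),
      ((s.map φ).sort (· ≤ ·)).countP (· ≤ a) = (s.filter (φ · ≤ a)).card := by
    intro φ a
    rw [← coe_countP, sort_eq, countP_map]
  rw [List.getElem_le_iff_lt_countP (pairwise_sort _ _), hcount]
  have hb := (List.getElem_le_iff_lt_countP (pairwise_sort _ _) hg).1 le_rfl
  rw [hcount] at hb
  refine hb.trans_le (card_le_card (monotone_filter_right s fun p hp => ?_))
  exact (h p).trans (by gcongr)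

theorem List.sum_take_eq_sum_getD {M : Type*} [AddCommMonoid M] (l : List M) (k : ℕ) :
    (l.take k).sum = ∑ i : Fin k, l.getD i 0 := by
  rw [Fin.sum_univ_eq_sum_range (fun i => l.getD i 0)]
  induction k with
  | zero => simp
  | succ k ih =>
    rw [List.take_add_one, List.sum_append, ih, Finset.sum_range_succ]
    cases h : l[k]? <;> simp [List.getD_eq_getElem?_getD, h]

theorem length_sortedDists (P : Finset X) (x : X) : (sortedDists P x).length = P.card := by
  simp [sortedDists]

theorem getD_sortedDists_le (P : Finset X) (x y : X) (i : ℕ) :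
    (sortedDists P x).getD i 0 ≤ (sortedDists P y).getD i 0 + dist x y := by
  by_cases hi : i < P.card
  · rw [List.getD_eq_getElem _ _ (by rwa [length_sortedDists]),
      List.getD_eq_getElem _ _ (by rwa [length_sortedDists])]
    exact Multiset.getElem_sort_map_le_add
      (fun p => (dist_triangle x y p).trans_eq (add_comm _ _)) _ _
  · rw [List.getD_eq_default _ _ (by rw [length_sortedDists]; omega),
      List.getD_eq_default _ _ (by rw [length_sortedDists]; omega), zero_add]
    exact dist_nonneg

theorem abs_getD_sortedDists_sub_le (P : Finset X) (x y : X) (i : ℕ) :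
    |(sortedDists P x).getD i 0 - (sortedDists P y).getD i 0| ≤ dist x y :=
  abs_sub_le_iff.2 ⟨sub_le_iff_le_add'.2 (getD_sortedDists_le P x y i),
    sub_le_iff_le_add'.2 (dist_comm x y ▸ getD_sortedDists_le P y x i)⟩

/-- Padded with zeros past `P.card`, so that `kdist P k = ‖nearestDists P k ·‖ / √k` for every
`k`. -/
noncomputable def nearestDists (P : Finset X) (k : ℕ) (x : X) : EuclideanSpace ℝ (Fin k) :=
  WithLp.toLp 2 fun i => (sortedDists P x).getD i 0

theorem dist_nearestDists_le (P : Finset X) (k : ℕ) (x y : X) :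
    dist (nearestDists P k x) (nearestDists P k y) ≤ √k * dist x y := by
  calc dist (nearestDists P k x) (nearestDists P k y)
      = √(∑ i : Fin k, |(sortedDists P x).getD i 0 - (sortedDists P y).getD i 0| ^ 2) := by
        simp [EuclideanSpace.dist_eq, nearestDists, Real.dist_eq]
    _ ≤ √(∑ _i : Fin k, dist x y ^ 2) := by
        gcongr with i
        exact abs_getD_sortedDists_sub_le P x y i
    _ = √k * dist x y := by
        simp [Real.sqrt_mul, Real.sqrt_sq dist_nonneg]

theorem kdist_eq_norm_nearestDists_div (P : Finset X) (k : ℕ) (x : X) :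
    kdist P k x = ‖nearestDists P k x‖ / √k := by
  rw [kdist, List.map_take, List.sum_take_eq_sum_getD, EuclideanSpace.norm_eq, one_div_mul_eq_div,
    Real.sqrt_div' _ (Nat.cast_nonneg k)]
  congr 2
  refine Finset.sum_congr rfl fun i _ => ?_
  simp only [nearestDists, List.getD_eq_getElem?_getD, List.getElem?_map, Real.norm_eq_abs, sq_abs]
  cases (sortedDists P x)[i.1]? <;> simp

theorem kdist_one_lipschitz_general (P : Finset X) (k : ℕ) (x y : X) :
    |kdist P k x - kdist P k y| ≤ dist x y := by
  rw [kdist_eq_norm_nearestDists_div, kdist_eq_norm_nearestDists_div, ← sub_div, abs_div,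
    abs_of_nonneg (Real.sqrt_nonneg _)]
  rcases k.eq_zero_or_pos with rfl | hk
  · simp
  rw [div_le_iff₀' (by positivity)]
  calc |‖nearestDists P k x‖ - ‖nearestDists P k y‖|
      ≤ dist (nearestDists P k x) (nearestDists P k y) :=
        (abs_norm_sub_norm_le _ _).trans_eq (dist_eq_norm _ _).symm
    _ ≤ √k * dist x y := dist_nearestDists_le P k x y

/-- The k-distance function is 1-Lipschitz. -/
theorem kdist_one_lipschitz (P : Finset X) (hP : P.Nonempty) (k : ℕ)
    (hk : 1 ≤ k) (hkP : k ≤ P.card) (x y : X) :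
    |kdist P k x - kdist P k y| ≤ dist x y :=
  kdist_one_lipschitz_general P k x y
end

section
/- Let P be an ε_k-noisy sample of a compact set K in a metric space X, and let Q be the output of the Declutter algorithm on (P,k). Then for every x ∈ K there exists q ∈ Q with d(x,q) ≤ 5ε_k. -/
/-!
Take a point `p ∈ P` nearest to `x ∈ K`; then `d(x, p) ≤ d_{P,k}(x) ≤ ε`. The k-distance is
1-Lipschitz (Cauchy–Schwarz against the k nearest neighbours of `x`), so `d_{P,k}(p) ≤ 2ε`.
Declutter either keeps `p` or discards it because some kept `q` has `d(p, q) < 2 d_{P,k}(p) ≤ 4ε`.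
-/

open Metric

variable {X : Type*} [MetricSpace X]

open Finset

theorem List.Pairwise.sum_take_card_le_sum {α : Type*} [AddCommMonoid α] [LinearOrder α]
    [IsOrderedAddMonoid α] {l : List α} (hl : l.Pairwise (· ≤ ·)) {u : Multiset α}
    (hu : u ≤ l) : (l.take (Multiset.card u)).sum ≤ u.sum := by
  induction l generalizing u with
  | nil =>
    obtain rfl : u = 0 := Multiset.le_zero.mp hu
    simp
  | cons a l ih =>
    rcases Multiset.empty_or_exists_mem u with rfl | ⟨c, hc⟩
    · simp
    obtain ⟨hal, hl⟩ := List.pairwise_cons.mp hl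
    rw [← Multiset.cons_coe] at hu
    obtain ⟨b, hb, hab, hbl⟩ : ∃ b ∈ u, a ≤ b ∧ u.erase b ≤ l := by
      by_cases ha : a ∈ u
      · exact ⟨a, ha, le_rfl, by simpa using Multiset.erase_le_erase a hu⟩
      · have hul : u ≤ l := (Multiset.le_cons_of_notMem ha).mp hu
        exact ⟨c, hc, hal c (by simpa using Multiset.mem_of_le hul hc),
          (Multiset.erase_le c u).trans hul⟩
    rw [← Multiset.cons_erase hb, Multiset.card_cons, Multiset.sum_cons, List.take_succ_cons,
      List.sum_cons]
    exact add_le_add hab (ih hl hbl)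

variable {P S : Finset X} {k : ℕ}

theorem sortedDists_coe (P : Finset X) (x : X) :
    (sortedDists P x : Multiset ℝ) = P.val.map (dist x) :=
  Multiset.sort_eq _ _

theorem kdist_nonneg (P : Finset X) (k : ℕ) (x : X) : 0 ≤ kdist P k x :=
  Real.sqrt_nonneg _

theorem natCast_mul_kdist_sq (P : Finset X) (k : ℕ) (x : X) :
    (k : ℝ) * kdist P k x ^ 2 = (((sortedDists P x).take k).map (· ^ 2)).sum := by
  rcases k.eq_zero_or_pos with rfl | hk
  · simp
  have hsum : 0 ≤ (((sortedDists P x).take k).map (· ^ 2)).sum :=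
    List.sum_nonneg (by simp only [List.mem_map]; rintro _ ⟨r, -, rfl⟩; positivity)
  rw [kdist, Real.sq_sqrt (mul_nonneg (by positivity) hsum)]
  field_simp

theorem natCast_mul_kdist_sq_le_sum (hSP : S ⊆ P) (hS : S.card = k) (y : X) :
    (k : ℝ) * kdist P k y ^ 2 ≤ ∑ q ∈ S, dist y q ^ 2 := by
  have hsorted : ((sortedDists P y).map (· ^ 2)).Pairwise (· ≤ ·) := by
    refine List.pairwise_map.mpr ((Multiset.pairwise_sort _ _).imp_of_mem ?_)
    intro a b ha _ hab
    have ha : a ∈ P.val.map (dist y) := by rw [← sortedDists_coe]; exact ha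
    obtain ⟨q, -, rfl⟩ := Multiset.mem_map.mp ha
    exact pow_le_pow_left₀ dist_nonneg hab 2
  have hsub : S.val.map (fun q => dist y q ^ 2) ≤ ((sortedDists P y).map (· ^ 2) : List ℝ) := by
    rw [← Multiset.map_coe, sortedDists_coe, Multiset.map_map]
    exact Multiset.map_le_map (val_le_iff.mpr hSP)
  have := hsorted.sum_take_card_le_sum hsub
  rwa [Multiset.card_map, card_val, hS, ← List.map_take,
    ← natCast_mul_kdist_sq] at this

theorem exists_finset_card_eq_sum_eq_natCast_mul_kdist_sq (hkP : k ≤ P.card) (x : X) :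
    ∃ S ⊆ P, S.card = k ∧ ∑ q ∈ S, dist x q ^ 2 = k * kdist P k x ^ 2 := by
  classical
  have hperm : (sortedDists P x).Perm (P.toList.map (dist x)) := by
    rw [← Multiset.coe_eq_coe, sortedDists_coe, ← Multiset.map_coe, coe_toList]
  obtain ⟨l, hl, hsub⟩ := ((List.take_sublist k _).subperm.trans hperm.subperm :
    ((sortedDists P x).take k).Subperm (P.toList.map (dist x)))
  obtain ⟨L, hLP, rfl⟩ := List.sublist_map_iff.mp hsub
  have hL : L.Nodup := P.nodup_toList.sublist hLP
  refine ⟨L.toFinset, fun q hq => mem_toList.mp (hLP.subset (List.mem_toFinset.mp hq)),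
    ?_, ?_⟩
  · rw [List.toFinset_card_of_nodup hL, ← List.length_map (f := dist x), hl.length_eq,
      List.length_take, sortedDists, Multiset.length_sort, Multiset.card_map, card_val]
    omega
  · rw [List.sum_toFinset _ hL, natCast_mul_kdist_sq, ← (hl.map (· ^ 2)).sum_eq, List.map_map]
    rfl

theorem exists_dist_le_kdist (hk : 0 < k) (hkP : k ≤ P.card) (x : X) :
    ∃ p ∈ P, dist x p ≤ kdist P k x := by
  obtain ⟨S, hSP, hS, hsum⟩ := exists_finset_card_eq_sum_eq_natCast_mul_kdist_sq hkP x
  have hne : S.Nonempty := card_pos.mp (hS ▸ hk)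
  obtain ⟨p, hp, hle⟩ := exists_le_of_sum_le hne (g := fun _ => kdist P k x ^ 2)
    (by rw [hsum, sum_const, hS, nsmul_eq_mul])
  exact ⟨p, hSP hp, (pow_le_pow_iff_left₀ dist_nonneg (kdist_nonneg P k x) two_ne_zero).mp hle⟩

theorem kdist_le_kdist_add_dist (hkP : k ≤ P.card) (x y : X) :
    kdist P k y ≤ kdist P k x + dist y x := by
  rcases k.eq_zero_or_pos with rfl | hk
  · simp [kdist]
  obtain ⟨S, hSP, hS, hsum⟩ := exists_finset_card_eq_sum_eq_natCast_mul_kdist_sq hkP x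
  set r := kdist P k x
  set d := dist y x
  have hk' : (0 : ℝ) < k := by exact_mod_cast hk
  have hr : 0 ≤ r := kdist_nonneg P k x
  have hCS : ∑ q ∈ S, dist x q ≤ k * r := by
    refine (pow_le_pow_iff_left₀ (sum_nonneg fun _ _ => dist_nonneg) (by positivity)
      two_ne_zero).mp ?_
    calc (∑ q ∈ S, dist x q) ^ 2 ≤ S.card * ∑ q ∈ S, dist x q ^ 2 := sq_sum_le_card_mul_sum_sq
      _ = (k * r) ^ 2 := by rw [hsum, hS]; ring
  have key : (k : ℝ) * kdist P k y ^ 2 ≤ k * (r + d) ^ 2 :=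
    calc (k : ℝ) * kdist P k y ^ 2 ≤ ∑ q ∈ S, dist y q ^ 2 := natCast_mul_kdist_sq_le_sum hSP hS y
      _ ≤ ∑ q ∈ S, (d + dist x q) ^ 2 :=
        sum_le_sum fun q _ => pow_le_pow_left₀ dist_nonneg (dist_triangle y x q) 2
      _ = k * d ^ 2 + 2 * d * ∑ q ∈ S, dist x q + ∑ q ∈ S, dist x q ^ 2 := by
        simp only [add_sq, sum_add_distrib, sum_const, hS, nsmul_eq_mul, mul_sum]
      _ ≤ k * d ^ 2 + 2 * d * (k * r) + k * r ^ 2 := by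
        rw [hsum]; gcongr
      _ = k * (r + d) ^ 2 := by ring
  exact (pow_le_pow_iff_left₀ (kdist_nonneg P k y) (by positivity) two_ne_zero).mp
    (le_of_mul_le_mul_left key hk')

section Declutter

variable {Y : Type*} {d : Y → Y → ℝ} {f : Y → ℝ}

theorem mem_declutterAux_of_mem {L Q : List Y} {q : Y} (hq : q ∈ Q) :
    q ∈ declutterAux d f Q L := by
  induction L generalizing Q with
  | nil => exact hq
  | cons p L ih =>
    rw [declutterAux]
    split_ifs
    · exact ih (List.mem_append_left _ hq)
    · exact ih hq

theorem exists_mem_declutterAux_le (hd : ∀ p, d p p = 0) (hf : ∀ p, 0 ≤ f p) {L : List Y}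
    (Q : List Y) {p : Y} (hp : p ∈ L) : ∃ q ∈ declutterAux d f Q L, d p q ≤ 2 * f p := by
  induction L generalizing Q with
  | nil => simp at hp
  | cons a L ih =>
    rw [declutterAux]
    split_ifs with hkeep
    · rcases List.mem_cons.mp hp with rfl | hp
      · exact ⟨p, mem_declutterAux_of_mem (by simp), by linarith [hd p, hf p]⟩
      · exact ih _ hp
    · rcases List.mem_cons.mp hp with rfl | hp
      · push Not at hkeep
        obtain ⟨q, hq, hlt⟩ := hkeep
        exact ⟨q, mem_declutterAux_of_mem hq, hlt.le⟩
      · exact ih _ hp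

theorem IsDeclutterOutput.exists_mem_le {P : Finset Y} {Q : List Y}
    (hQ : IsDeclutterOutput d f P Q) (hd : ∀ p, d p p = 0) (hf : ∀ p, 0 ≤ f p) {p : Y}
    (hp : p ∈ P) : ∃ q ∈ Q, d p q ≤ 2 * f p := by
  obtain ⟨L, hperm, -, rfl⟩ := hQ
  exact exists_mem_declutterAux_le hd hf [] (hperm.mem_iff.mpr (mem_toList.mpr hp))

end Declutter

theorem declutter_covers_ground_truth_general (P : Finset X) (k : ℕ) (hk : 1 ≤ k)
    (hkP : k ≤ P.card) (K : Set X)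
    (ε : ℝ) (hsample : NoisySample P k K ε)
    (Q : List X) (hQ : IsDeclutterOutput (fun a b => dist a b) (kdist P k) P Q) :
    ∀ x ∈ K, ∃ q ∈ Q, dist x q ≤ 5 * ε := by
  intro x hx
  have hkx : kdist P k x ≤ ε := hsample.1 x hx
  obtain ⟨p, hpP, hxp⟩ := exists_dist_le_kdist hk hkP x
  have hkp : kdist P k p ≤ 2 * ε := by
    linarith [kdist_le_kdist_add_dist hkP x p, dist_comm p x]
  obtain ⟨q, hqQ, hpq⟩ := hQ.exists_mem_le dist_self (kdist_nonneg P k) hpP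
  refine ⟨q, hqQ, ?_⟩
  calc dist x q ≤ dist x p + dist p q := dist_triangle x p q
    _ ≤ ε + 2 * (2 * ε) := add_le_add (hxp.trans hkx) (hpq.trans (by linarith))
    _ = 5 * ε := by ring

/-- Every point of the ground truth `K` has a point of the Declutter output within 5ε. -/
theorem declutter_covers_ground_truth (P : Finset X) (k : ℕ) (hk : 1 ≤ k)
    (hkP : k ≤ P.card) (K : Set X) (hK : IsCompact K) (hKne : K.Nonempty)
    (ε : ℝ) (hsample : NoisySample P k K ε)
    (Q : List X) (hQ : IsDeclutterOutput (fun a b => dist a b) (kdist P k) P Q) :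
    ∀ x ∈ K, ∃ q ∈ Q, dist x q ≤ 5 * ε :=
  declutter_covers_ground_truth_general P k hk hkP K ε hsample Q hQ
end

section
/- Let P be an adaptive (ε_k, c)-uniform noisy sample of a compact set K with feature size f, and let Q = {q_1,...,q_m} (indexed in the order Declutter kept them) be the output of Declutter(P,k). Then for any i ≠ j, d(q_i, q_j) ≥ 2(ε_k/c) f(q̄_i), where q̄_i is a nearest point of q_i in K. -/
open Metric

variable {X : Type*} [MetricSpace X]

/-- `P` is an adaptive ε_k-noisy sample of `K` with respect to the feature size `f`. -/
def AdaptiveNoisySample (P : Finset X) (k : ℕ) (K : Set X) (f : X → ℝ) (ε : ℝ) : Prop :=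
  (∀ x ∈ K, kdist P k x ≤ ε * f x) ∧
    ∀ y : X, ∀ ybar ∈ K, (∀ z ∈ K, dist y ybar ≤ dist y z) →
      infDist y K ≤ kdist P k y + ε * f ybar

section Declutter

variable {α : Type*} (d : α → α → ℝ) (f : α → ℝ)

theorem declutterAux_sublist : ∀ Q L : List α, (declutterAux d f Q L).Sublist (Q ++ L)
  | Q, [] => by simp [declutterAux]
  | Q, p :: rest => by
    rw [declutterAux]
    split
    · simpa using declutterAux_sublist (Q ++ [p]) rest
    · exact (declutterAux_sublist Q rest).trans (by simp)

theorem declutterAux_pairwise : ∀ Q L : List α, Q.Pairwise (fun a b => 2 * f b ≤ d b a) →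
    (declutterAux d f Q L).Pairwise (fun a b => 2 * f b ≤ d b a)
  | _, [], hQ => hQ
  | Q, p :: rest, hQ => by
    rw [declutterAux]
    split
    case isTrue hkeep =>
      refine declutterAux_pairwise (Q ++ [p]) rest (List.pairwise_append.mpr ⟨hQ, by simp, ?_⟩)
      simpa using hkeep
    case isFalse => exact declutterAux_pairwise Q rest hQ

theorem declutter_sublist (L : List α) : (declutter d f L).Sublist L := by
  simpa [declutter] using declutterAux_sublist d f [] L

theorem declutter_pairwise (L : List α) :
    (declutter d f L).Pairwise (fun a b => 2 * f b ≤ d b a) :=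
  declutterAux_pairwise d f [] L .nil

variable {d f} {P : Finset α} {Q : List α}

theorem IsDeclutterOutput.mem (hQ : IsDeclutterOutput d f P Q) {q : α} (hq : q ∈ Q) : q ∈ P := by
  obtain ⟨L, hperm, -, rfl⟩ := hQ
  exact Finset.mem_toList.mp (hperm.subset ((declutter_sublist d f L).subset hq))

theorem IsDeclutterOutput.pairwise (hQ : IsDeclutterOutput d f P Q) :
    Q.Pairwise (fun a b => f a ≤ f b ∧ 2 * f b ≤ d b a) := by
  obtain ⟨L, -, hsorted, rfl⟩ := hQ
  exact (hsorted.sublist (declutter_sublist d f L)).and (declutter_pairwise d f L)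

/-- For `i < j` the bound comes from `q_j` not being discarded, plus `f q_i ≤ f q_j`. -/
theorem IsDeclutterOutput.two_mul_le_of_ne (hd : ∀ a b, d a b = d b a)
    (hQ : IsDeclutterOutput d f P Q) {i j : ℕ} (hi : i < Q.length) (hj : j < Q.length)
    (hij : i ≠ j) : 2 * f (Q.get ⟨i, hi⟩) ≤ d (Q.get ⟨i, hi⟩) (Q.get ⟨j, hj⟩) := by
  have hpair := List.pairwise_iff_get.mp hQ.pairwise
  rcases lt_or_gt_of_ne hij with hlt | hgt
  · obtain ⟨hle, hsep⟩ := hpair ⟨i, hi⟩ ⟨j, hj⟩ hlt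
    rw [hd]
    linarith
  · exact (hpair ⟨j, hj⟩ ⟨i, hi⟩ hgt).2

end Declutter

theorem declutter_output_separated_adaptive_general (P : Finset X) (k : ℕ) (K : Set X) (f : X → ℝ)
    (ε c : ℝ)
    (hunif : ∀ p ∈ P, ∀ pbar ∈ K, (∀ z ∈ K, dist p pbar ≤ dist p z) →
      (ε / c) * f pbar ≤ kdist P k p)
    (Q : List X) (hQ : IsDeclutterOutput (fun a b => dist a b) (kdist P k) P Q) :
    ∀ (i j : ℕ) (hi : i < Q.length) (hj : j < Q.length), i ≠ j →
      ∀ qbar ∈ K, (∀ z ∈ K, dist (Q.get ⟨i, hi⟩) qbar ≤ dist (Q.get ⟨i, hi⟩) z) →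
        2 * (ε / c) * f qbar ≤ dist (Q.get ⟨i, hi⟩) (Q.get ⟨j, hj⟩) := by
  intro i j hi hj hij qbar hqbar hnearest
  have hsep := hQ.two_mul_le_of_ne dist_comm hi hj hij
  have hlow := hunif _ (hQ.mem (Q.get_mem _)) qbar hqbar hnearest
  linarith

/-- Adaptive uniform case: the output points of Declutter (in the order they were kept)
are pairwise separated by at least `2 (ε/c) f(q̄ᵢ)`. -/
theorem declutter_output_separated_adaptive (P : Finset X) (k : ℕ) (hk : 1 ≤ k)
    (hkP : k ≤ P.card) (K : Set X) (hK : IsCompact K) (hKne : K.Nonempty)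
    (f : X → ℝ) (hfpos : ∀ x ∈ K, 0 < f x)
    (hflip : ∀ x ∈ K, ∀ y ∈ K, |f x - f y| ≤ dist x y)
    (ε c : ℝ) (hc : 0 < c) (hsample : AdaptiveNoisySample P k K f ε)
    (hunif : ∀ p ∈ P, ∀ pbar ∈ K, (∀ z ∈ K, dist p pbar ≤ dist p z) →
      (ε / c) * f pbar ≤ kdist P k p)
    (Q : List X) (hQ : IsDeclutterOutput (fun a b => dist a b) (kdist P k) P Q) :
    ∀ (i j : ℕ) (hi : i < Q.length) (hj : j < Q.length), i ≠ j →
      ∀ qbar ∈ K, (∀ z ∈ K, dist (Q.get ⟨i, hi⟩) qbar ≤ dist (Q.get ⟨i, hi⟩) z) →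
        2 * (ε / c) * f qbar ≤ dist (Q.get ⟨i, hi⟩) (Q.get ⟨j, hj⟩) :=
  declutter_output_separated_adaptive_general P k K f ε c hunif Q hQ
end
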